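/- The maps ρ_λ form a representation of the based path group of the ax+b group: for t > 0, λ : [0,2π] → ℂ with Re λ, Im λ ∈ L²([0,2π]), α₁, α₂ ∈ C²([0,2π],ℝ) with α₁(0) = α₂(0) = 0, and b₁, b₂ ∈ L²([0,2π],ℝ), one has the pointwise operator identity ρ_λ(α₁,b₁) ∘ ρ_λ(α₂,b₂) = ρ_λ(α₁+α₂, e^{α₁}b₂ + b₁) on all functions f : C₀ → ℂ, where (e^{α₁}b₂)(u) = e^{α₁(u)} b₂(u) and the group law of the path group is (e^{α₁},b₁)·(e^{α₂},b₂) = (e^{α₁+α₂}, e^{α₁}b₂+b₁). -/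

import Mathlib

open MeasureTheory Real

/-- Extension of a function on `[0, 2π]` to `ℝ` (by `0` outside), used to write integrals
over `[0, 2π]` of functionals of a path. -/
noncomputable def pathExt (x : Set.Icc (0 : ℝ) (2 * π) → ℝ) : ℝ → ℝ :=
  fun u => if h : u ∈ Set.Icc (0 : ℝ) (2 * π) then x ⟨u, h⟩ else 0

/-- The integration-by-parts form `⟨h,x⟩ = h'(2π)x(2π) - ∫₀^{2π} x(u)h''(u) du` of the
Stieltjes integral `∫₀^{2π} h'(u) dx(u)`. -/
noncomputable def wienerPairing (h : ℝ → ℝ) (x : Set.Icc (0 : ℝ) (2 * π) → ℝ) : ℝ :=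
  deriv h (2 * π) * pathExt x (2 * π)
    - ∫ u in (0 : ℝ)..(2 * π), pathExt x u * deriv (deriv h) u

/-- The operator `ρ_λ(α, b)` of the based path group of the `ax+b` group, acting on
functionals of paths `x` on `[0,2π]`:
`(ρ_λ(α,b)f)(x) = exp(-(1/(4t))∫₀^{2π}α'(u)² du - (1/(2t))⟨α,x⟩)
  · exp(∫₀^{2π} λ(u)b(u)e^{x(u)} du) · f(x+α)`. -/
noncomputable def wienerRho (t : ℝ) (lam : ℝ → ℂ) (α b : ℝ → ℝ)
    (f : (Set.Icc (0 : ℝ) (2 * π) → ℝ) → ℂ) (x : Set.Icc (0 : ℝ) (2 * π) → ℝ) : ℂ :=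
  Complex.exp (((-(1 / (4 * t)) * ∫ u in (0 : ℝ)..(2 * π), (deriv α u) ^ 2)
      - (1 / (2 * t)) * wienerPairing α x : ℝ)) *
  Complex.exp (∫ u in (0 : ℝ)..(2 * π), lam u * (b u : ℂ) *
      Complex.exp ((pathExt x u : ℝ) : ℂ)) *
  f (x + fun u => α u.1)

/-! The real exponent `E(α, x) = -(1/4t)∫α'² - (1/2t)⟨α, x⟩` is an additive cocycle for the
translation action: expanding `∫(α₁' + α₂')²` produces the cross term `2∫α₁'α₂'`, and this is
exactly what `⟨α₂, ·⟩` picks up from the shift `x ↦ x + α₁`, because integrating by parts with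
`α₁(0) = 0` gives `⟨α₂, α₁⟩ = ∫α₁'α₂'`. The complex exponent `∫λ b eˣ` is additive in `b`, and
the shift multiplies `eˣ` by `e^{α₁}`, which turns `b₂` into `e^{α₁} b₂`. -/

section PathExt

variable {x y : Set.Icc (0 : ℝ) (2 * π) → ℝ}

lemma pathExt_of_mem {u : ℝ} (hu : u ∈ Set.Icc (0 : ℝ) (2 * π)) : pathExt x u = x ⟨u, hu⟩ :=
  dif_pos hu

lemma pathExt_add : pathExt (x + y) = pathExt x + pathExt y := by
  funext u
  by_cases hu : u ∈ Set.Icc (0 : ℝ) (2 * π)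
  · simp only [Pi.add_apply, pathExt_of_mem hu]
  · simp [pathExt, hu]

lemma pathExt_comp_val_of_mem (g : ℝ → ℝ) {u : ℝ} (hu : u ∈ Set.Icc (0 : ℝ) (2 * π)) :
    pathExt (fun v => g v.1) u = g u :=
  pathExt_of_mem hu

lemma continuousOn_pathExt (hx : Continuous x) : ContinuousOn (pathExt x) (Set.Icc 0 (2 * π)) :=
  ((hx.comp (continuous_projIcc (h := two_pi_pos.le))).continuousOn).congr fun u hu => by
    simp [pathExt_of_mem hu, Set.projIcc_of_mem two_pi_pos.le hu]

lemma intervalIntegrable_pathExt_mul (hx : Continuous x) {g : ℝ → ℝ} (hg : Continuous g) :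
    IntervalIntegrable (fun u => pathExt x u * g u) volume 0 (2 * π) :=
  ContinuousOn.intervalIntegrable <| by
    rw [Set.uIcc_of_le two_pi_pos.le]
    exact (continuousOn_pathExt hx).mul hg.continuousOn

end PathExt

section Pairing

variable {h h₁ h₂ : ℝ → ℝ} {x y : Set.Icc (0 : ℝ) (2 * π) → ℝ}

lemma wienerPairing_add_left (hh₁ : ContDiff ℝ 2 h₁) (hh₂ : ContDiff ℝ 2 h₂) (hx : Continuous x) :
    wienerPairing (h₁ + h₂) x = wienerPairing h₁ x + wienerPairing h₂ x := by
  have hd : deriv (h₁ + h₂) = deriv h₁ + deriv h₂ := funext fun u =>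
    deriv_add (hh₁.differentiable two_ne_zero u) (hh₂.differentiable two_ne_zero u)
  have hdd : deriv (deriv h₁ + deriv h₂) = deriv (deriv h₁) + deriv (deriv h₂) :=
    funext fun u => deriv_add (hh₁.deriv'.differentiable one_ne_zero u)
      (hh₂.deriv'.differentiable one_ne_zero u)
  simp only [wienerPairing, hd, hdd, Pi.add_apply, mul_add]
  rw [intervalIntegral.integral_add
    (intervalIntegrable_pathExt_mul hx (hh₁.deriv'.continuous_deriv le_rfl))
    (intervalIntegrable_pathExt_mul hx (hh₂.deriv'.continuous_deriv le_rfl))]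
  ring

lemma wienerPairing_add_right (hh : ContDiff ℝ 2 h) (hx : Continuous x) (hy : Continuous y) :
    wienerPairing h (x + y) = wienerPairing h x + wienerPairing h y := by
  have hcont : Continuous (deriv (deriv h)) := hh.deriv'.continuous_deriv le_rfl
  simp only [wienerPairing, pathExt_add, Pi.add_apply, add_mul]
  rw [intervalIntegral.integral_add (intervalIntegrable_pathExt_mul hx hcont)
    (intervalIntegrable_pathExt_mul hy hcont)]
  ring

lemma wienerPairing_comp_val {g : ℝ → ℝ} (hh : ContDiff ℝ 2 h) (hg : ContDiff ℝ 1 g)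
    (hg0 : g 0 = 0) :
    wienerPairing h (fun u => g u.1) = ∫ u in (0 : ℝ)..(2 * π), deriv g u * deriv h u := by
  have hparts := intervalIntegral.integral_mul_deriv_eq_deriv_mul (a := 0) (b := 2 * π)
    (fun u _ => (hg.differentiable one_ne_zero u).hasDerivAt)
    (fun u _ => (hh.deriv'.differentiable one_ne_zero u).hasDerivAt)
    ((hg.continuous_deriv le_rfl).intervalIntegrable _ _)
    ((hh.deriv'.continuous_deriv le_rfl).intervalIntegrable _ _)
  have hint : ∫ u in (0 : ℝ)..(2 * π), pathExt (fun v => g v.1) u * deriv (deriv h) u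
      = ∫ u in (0 : ℝ)..(2 * π), g u * deriv (deriv h) u :=
    intervalIntegral.integral_congr fun u hu => by
      rw [Set.uIcc_of_le two_pi_pos.le] at hu
      rw [pathExt_comp_val_of_mem g hu]
  rw [wienerPairing, hint, hparts, hg0,
    pathExt_comp_val_of_mem g (Set.right_mem_Icc.mpr two_pi_pos.le)]
  ring

end Pairing

lemma integral_deriv_add_sq {f g : ℝ → ℝ} {a b : ℝ} (hf : ContDiff ℝ 1 f) (hg : ContDiff ℝ 1 g) :
    ∫ u in a..b, deriv (f + g) u ^ 2
      = (∫ u in a..b, deriv f u ^ 2) + (∫ u in a..b, deriv g u ^ 2)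
        + 2 * ∫ u in a..b, deriv f u * deriv g u := by
  have hf' := hf.continuous_deriv le_rfl
  have hg' := hg.continuous_deriv le_rfl
  have hexpand : ∀ u, deriv (f + g) u ^ 2
      = deriv f u ^ 2 + (deriv g u ^ 2 + 2 * (deriv f u * deriv g u)) := fun u => by
    rw [deriv_add (hf.differentiable one_ne_zero u) (hg.differentiable one_ne_zero u)]
    ring
  simp only [hexpand]
  rw [intervalIntegral.integral_add, intervalIntegral.integral_add,
    intervalIntegral.integral_const_mul, add_assoc]
  all_goals exact Continuous.intervalIntegrable (by fun_prop) _ _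

noncomputable def cameronMartinExponent (t : ℝ) (α : ℝ → ℝ) (x : Set.Icc (0 : ℝ) (2 * π) → ℝ) :
    ℝ :=
  -(1 / (4 * t)) * (∫ u in (0 : ℝ)..(2 * π), (deriv α u) ^ 2) - (1 / (2 * t)) * wienerPairing α x

noncomputable def wienerPotential (lam : ℝ → ℂ) (b : ℝ → ℝ) (x : Set.Icc (0 : ℝ) (2 * π) → ℝ) :
    ℂ :=
  ∫ u in (0 : ℝ)..(2 * π), lam u * (b u : ℂ) * Complex.exp ((pathExt x u : ℝ) : ℂ)

lemma wienerRho_eq (t : ℝ) (lam : ℝ → ℂ) (α b : ℝ → ℝ)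
    (f : (Set.Icc (0 : ℝ) (2 * π) → ℝ) → ℂ) (x : Set.Icc (0 : ℝ) (2 * π) → ℝ) :
    wienerRho t lam α b f x = Complex.exp (cameronMartinExponent t α x)
      * Complex.exp (wienerPotential lam b x) * f (x + fun u => α u.1) :=
  rfl

section Cocycle

variable {α₁ α₂ : ℝ → ℝ} {x : Set.Icc (0 : ℝ) (2 * π) → ℝ}

lemma cameronMartinExponent_add (t : ℝ) (hα₁ : ContDiff ℝ 2 α₁) (hα₂ : ContDiff ℝ 2 α₂)
    (hα₁0 : α₁ 0 = 0) (hx : Continuous x) :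
    cameronMartinExponent t (α₁ + α₂) x
      = cameronMartinExponent t α₁ x + cameronMartinExponent t α₂ (x + fun u => α₁ u.1) := by
  simp only [cameronMartinExponent]
  rw [integral_deriv_add_sq (hα₁.of_le one_le_two) (hα₂.of_le one_le_two),
    wienerPairing_add_left hα₁ hα₂ hx,
    wienerPairing_add_right (y := fun u => α₁ u.1) hα₂ hx (by fun_prop),
    wienerPairing_comp_val hα₂ (hα₁.of_le one_le_two) hα₁0]
  ring

variable {lam : ℝ → ℂ} {b b₁ b₂ : ℝ → ℝ}

lemma intervalIntegrable_wienerPotential_integrand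
    (hlam : MemLp lam 2 (volume.restrict (Set.Ioc 0 (2 * π))))
    (hb : MemLp b 2 (volume.restrict (Set.Ioc 0 (2 * π)))) (hx : Continuous x) :
    IntervalIntegrable (fun u => lam u * (b u : ℂ) * Complex.exp ((pathExt x u : ℝ) : ℂ))
      volume 0 (2 * π) := by
  have hlb : IntervalIntegrable (fun u => lam u * (b u : ℂ)) volume 0 (2 * π) := by
    rw [intervalIntegrable_iff_integrableOn_Ioc_of_le two_pi_pos.le]
    exact hlam.integrable_mul hb.ofReal
  refine hlb.mul_continuousOn ?_
  rw [Set.uIcc_of_le two_pi_pos.le]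
  exact Complex.continuous_exp.comp_continuousOn
    (Complex.continuous_ofReal.comp_continuousOn (continuousOn_pathExt hx))

lemma wienerPotential_add (hlam : MemLp lam 2 (volume.restrict (Set.Ioc 0 (2 * π))))
    (hb₁ : MemLp b₁ 2 (volume.restrict (Set.Ioc 0 (2 * π))))
    (hb₂ : MemLp b₂ 2 (volume.restrict (Set.Ioc 0 (2 * π))))
    (hα₁ : Continuous α₁) (hx : Continuous x) :
    wienerPotential lam (fun u => Real.exp (α₁ u) * b₂ u + b₁ u) x
      = wienerPotential lam b₁ x + wienerPotential lam b₂ (x + fun u => α₁ u.1) := by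
  rw [wienerPotential, wienerPotential, wienerPotential,
    ← intervalIntegral.integral_add (intervalIntegrable_wienerPotential_integrand hlam hb₁ hx)
      (intervalIntegrable_wienerPotential_integrand (x := x + fun u => α₁ u.1) hlam hb₂
        (hx.add (by fun_prop)))]
  refine intervalIntegral.integral_congr fun u hu => ?_
  rw [Set.uIcc_of_le two_pi_pos.le] at hu
  simp only [pathExt_add, Pi.add_apply, pathExt_comp_val_of_mem α₁ hu]
  push_cast [Complex.ofReal_exp, Complex.exp_add]
  ring

end Cocycle

/-- The maps `ρ_λ` form a representation of the based path group of the `ax+b` group: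
`ρ_λ(α₁,b₁) ∘ ρ_λ(α₂,b₂) = ρ_λ(α₁+α₂, e^{α₁}b₂ + b₁)` pointwise on all functionals
`f : C₀ → ℂ` (evaluated at points of `C₀`, i.e. continuous paths vanishing at `0`). -/
theorem wienerRho_mul (t : ℝ) (lam : ℝ → ℂ)
    (hlamRe : MemLp (fun u => (lam u).re) 2 (volume.restrict (Set.Ioc 0 (2 * π))))
    (hlamIm : MemLp (fun u => (lam u).im) 2 (volume.restrict (Set.Ioc 0 (2 * π))))
    (α₁ α₂ : ℝ → ℝ) (hα₁ : ContDiff ℝ 2 α₁) (hα₂ : ContDiff ℝ 2 α₂)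
    (hα₁0 : α₁ 0 = 0)
    (b₁ b₂ : ℝ → ℝ) (hb₁ : MemLp b₁ 2 (volume.restrict (Set.Ioc 0 (2 * π))))
    (hb₂ : MemLp b₂ 2 (volume.restrict (Set.Ioc 0 (2 * π))))
    (f : (Set.Icc (0 : ℝ) (2 * π) → ℝ) → ℂ)
    (x : Set.Icc (0 : ℝ) (2 * π) → ℝ) (hx : Continuous x) :
    wienerRho t lam α₁ b₁ (wienerRho t lam α₂ b₂ f) x
      = wienerRho t lam (α₁ + α₂) (fun u => Real.exp (α₁ u) * b₂ u + b₁ u) f x := by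
  have hlam : MemLp lam 2 (volume.restrict (Set.Ioc 0 (2 * π))) :=
    memLp_re_im_iff.mp ⟨hlamRe, hlamIm⟩
  have hshift : (x + fun u => α₁ u.1) + (fun u => α₂ u.1) = x + fun u => (α₁ + α₂) u.1 :=
    add_assoc _ _ _
  simp only [wienerRho_eq, hshift, cameronMartinExponent_add t hα₁ hα₂ hα₁0 hx,
    wienerPotential_add hlam hb₁ hb₂ hα₁.continuous hx, Complex.ofReal_add, Complex.exp_add]
  ring
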